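/- Let N be a real number, m a natural number, and f : ℂ → ℂ an entire function. Set ψ₀(z) = f(z)·(1+|z|²)^{-N} and define ψ = D*_{N-m}(D*_{N-m+1}(··· D*_{N-1}(ψ₀)···)) (the composition of the m raising operators D*_{N-1}, …, D*_{N-m} applied to ψ₀). Then L_{N-m} ψ = N(N+1) ψ. In particular, writing q = 2(N-m), ψ is an eigenfunction of the Dirac monopole Hamiltonian H_q = L_{N-m} - (N-m)² with charge q at the eigenvalue λ = (2m+1)(q/2) + m(m+1). -/

import Mathlib

open Complex ComplexConjugate MeasureTheory

noncomputable section

/-- Partial derivative in the x-direction (identifying ℂ with ℝ²). -/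
def pdx (f : ℂ → ℂ) (z : ℂ) : ℂ := fderiv ℝ f z 1

/-- Partial derivative in the y-direction. -/
def pdy (f : ℂ → ℂ) (z : ℂ) : ℂ := fderiv ℝ f z Complex.I

/-- Wirtinger derivative ∂ = (∂ₓ - i ∂_y)/2. -/
def wd (f : ℂ → ℂ) (z : ℂ) : ℂ := (pdx f z - Complex.I * pdy f z) / 2

/-- Wirtinger derivative ∂̄ = (∂ₓ + i ∂_y)/2. -/
def wdb (f : ℂ → ℂ) (z : ℂ) : ℂ := (pdx f z + Complex.I * pdy f z) / 2

/-- Lowering operator D_N ψ = (1+|z|²)∂̄ψ + Nzψ. -/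
def DN (N : ℝ) (ψ : ℂ → ℂ) (z : ℂ) : ℂ :=
  (1 + z * conj z) * wdb ψ z + (N : ℂ) * z * ψ z

/-- Raising operator D_N* ψ = -(1+|z|²)∂ψ + (N+1)z̄ψ. -/
def DNs (N : ℝ) (ψ : ℂ → ℂ) (z : ℂ) : ℂ :=
  -(1 + z * conj z) * wd ψ z + ((N : ℂ) + 1) * conj z * ψ z

/-- Dirac monopole operator
L_N ψ = -(1+|z|²)²∂∂̄ψ - Nz(1+|z|²)∂ψ + Nz̄(1+|z|²)∂̄ψ + N²(1+|z|²)ψ. -/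
def LN (N : ℝ) (ψ : ℂ → ℂ) (z : ℂ) : ℂ :=
  -(1 + z * conj z)^2 * wd (wdb ψ) z
    - (N : ℂ) * z * (1 + z * conj z) * wd ψ z
    + (N : ℂ) * conj z * (1 + z * conj z) * wdb ψ z
    + (N : ℂ)^2 * (1 + z * conj z) * ψ z

/-- The chain of raising operators: ψ₀ ↦ D*_{N-m}(D*_{N-m+1}(··· D*_{N-1}(ψ₀)···)). -/
def raiseChain (N : ℝ) (ψ0 : ℂ → ℂ) : ℕ → ℂ → ℂ
  | 0 => ψ0
  | k + 1 => fun z => DNs (N - ((k : ℝ) + 1)) (raiseChain N ψ0 k) z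

/-! The raising and lowering operators factor the monopole operator:
`D*_K D_K = L_K - K(K+1)` and `D_K D*_K = L_{K+1} - K(K+1)`, the second using `∂∂̄ = ∂̄∂`.
Hence `D*_K` maps an eigenfunction of `L_{K+1}` to an eigenfunction of `L_K` with the same
eigenvalue. Since `f` is holomorphic and `∂̄ (1 + |z|²)^{-N} = -N z (1 + |z|²)^{-N-1}`, the lowering
operator `D_N` annihilates `ψ₀ = f (1 + |z|²)^{-N}`, so `L_N ψ₀ = N(N+1) ψ₀`; each raising step
keeps the eigenvalue `N(N+1)`, and the Hamiltonian form is the identity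
`N(N+1) - (N-m)² = (2m+1)(N-m) + m(m+1)`. -/

open scoped ContDiff

section Wirtinger

variable {f g : ℂ → ℂ} {z : ℂ}

theorem HasFDerivAt.wd_eq {L : ℂ →L[ℝ] ℂ} (h : HasFDerivAt f L z) :
    wd f z = (L 1 - I * L I) / 2 := by
  rw [wd, pdx, pdy, h.fderiv]

theorem HasFDerivAt.wdb_eq {L : ℂ →L[ℝ] ℂ} (h : HasFDerivAt f L z) :
    wdb f z = (L 1 + I * L I) / 2 := by
  rw [wdb, pdx, pdy, h.fderiv]

theorem wd_add (hf : DifferentiableAt ℝ f z) (hg : DifferentiableAt ℝ g z) :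
    wd (fun w => f w + g w) z = wd f z + wd g z := by
  rw [(hf.hasFDerivAt.fun_add hg.hasFDerivAt).wd_eq, hf.hasFDerivAt.wd_eq, hg.hasFDerivAt.wd_eq]
  simp only [add_apply]
  ring

theorem wdb_add (hf : DifferentiableAt ℝ f z) (hg : DifferentiableAt ℝ g z) :
    wdb (fun w => f w + g w) z = wdb f z + wdb g z := by
  rw [(hf.hasFDerivAt.fun_add hg.hasFDerivAt).wdb_eq, hf.hasFDerivAt.wdb_eq, hg.hasFDerivAt.wdb_eq]
  simp only [add_apply]
  ring

theorem wdb_neg (hf : DifferentiableAt ℝ f z) : wdb (fun w => -f w) z = -wdb f z := by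
  rw [hf.hasFDerivAt.fun_neg.wdb_eq, hf.hasFDerivAt.wdb_eq]
  simp only [neg_apply]
  ring

theorem wd_mul (hf : DifferentiableAt ℝ f z) (hg : DifferentiableAt ℝ g z) :
    wd (fun w => f w * g w) z = wd f z * g z + f z * wd g z := by
  rw [(hf.hasFDerivAt.fun_mul hg.hasFDerivAt).wd_eq, hf.hasFDerivAt.wd_eq, hg.hasFDerivAt.wd_eq]
  simp only [add_apply, smul_apply, smul_eq_mul]
  ring

theorem wdb_mul (hf : DifferentiableAt ℝ f z) (hg : DifferentiableAt ℝ g z) :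
    wdb (fun w => f w * g w) z = wdb f z * g z + f z * wdb g z := by
  rw [(hf.hasFDerivAt.fun_mul hg.hasFDerivAt).wdb_eq, hf.hasFDerivAt.wdb_eq, hg.hasFDerivAt.wdb_eq]
  simp only [add_apply, smul_apply, smul_eq_mul]
  ring

theorem wd_const (c : ℂ) : wd (fun _ => c) z = 0 := by
  simp [(hasFDerivAt_const c z).wd_eq]

theorem wdb_const (c : ℂ) : wdb (fun _ => c) z = 0 := by
  simp [(hasFDerivAt_const c z).wdb_eq]

theorem wd_id : wd (fun w => w) z = 1 :=
  (hasFDerivAt_id z).wd_eq.trans (by simp)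

theorem wdb_id : wdb (fun w => w) z = 0 :=
  (hasFDerivAt_id z).wdb_eq.trans (by simp)

@[fun_prop]
theorem contDiff_conj {n : ℕ∞ω} : ContDiff ℝ n (fun z : ℂ => conj z) :=
  conjCLE.contDiff

theorem hasFDerivAt_conj : HasFDerivAt conj (conjCLE : ℂ →L[ℝ] ℂ) z :=
  conjCLE.hasFDerivAt

theorem wd_conj : wd conj z = 0 := by
  simp [hasFDerivAt_conj.wd_eq]

theorem wdb_conj : wdb conj z = 1 := by
  simp [hasFDerivAt_conj.wdb_eq]

theorem wdb_comp {g : ℂ → ℂ} (hg : DifferentiableAt ℂ g (f z)) (hf : DifferentiableAt ℝ f z) :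
    wdb (fun w => g (f w)) z = deriv g (f z) * wdb f z := by
  have hgf := (hg.hasDerivAt.hasFDerivAt.restrictScalars ℝ).comp z hf.hasFDerivAt
  rw [show (fun w => g (f w)) = g ∘ f from rfl, hgf.wdb_eq, hf.hasFDerivAt.wdb_eq]
  simp only [ContinuousLinearMap.comp_apply, ContinuousLinearMap.coe_restrictScalars',
    ContinuousLinearMap.toSpanSingleton_apply, smul_eq_mul]
  ring

theorem wdb_eq_zero_of_differentiableAt (hf : DifferentiableAt ℂ f z) : wdb f z = 0 := by
  simpa [wdb_id] using wdb_comp (f := fun w => w) hf differentiableAt_id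

end Wirtinger

section SecondOrder

variable {ψ : ℂ → ℂ} {z : ℂ} {m n : ℕ∞ω}

theorem ContDiffAt.wd (h : ContDiffAt ℝ n ψ z) (hmn : m + 1 ≤ n) : ContDiffAt ℝ m (wd ψ) z := by
  have := h.fderiv_right hmn
  unfold _root_.wd pdx pdy
  fun_prop

theorem ContDiffAt.wdb (h : ContDiffAt ℝ n ψ z) (hmn : m + 1 ≤ n) : ContDiffAt ℝ m (wdb ψ) z := by
  have := h.fderiv_right hmn
  unfold _root_.wdb pdx pdy
  fun_prop

theorem wdb_wd_comm (h : ContDiffAt ℝ 2 ψ z) : wdb (wd ψ) z = wd (wdb ψ) z := by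
  have hD : HasFDerivAt (fderiv ℝ ψ) (fderiv ℝ (fderiv ℝ ψ) z) z :=
    ((h.fderiv_right (m := 1) le_rfl).differentiableAt one_ne_zero).hasFDerivAt
  have hpd (v : ℂ) : HasFDerivAt (fun w => fderiv ℝ ψ w v)
      ((ContinuousLinearMap.apply ℝ ℂ v).comp (fderiv ℝ (fderiv ℝ ψ) z)) z :=
    (ContinuousLinearMap.apply ℝ ℂ v).hasFDerivAt.comp z hD
  have hsymm := h.isSymmSndFDerivAt (by simp) 1 I
  have hwd : HasFDerivAt (wd ψ) _ z :=
    ((hpd 1).fun_sub ((hpd I).const_mul I)).mul_const (2⁻¹ : ℂ) |>.congr_of_eventuallyEq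
      (.of_forall fun w => div_eq_mul_inv _ _)
  have hwdb : HasFDerivAt (wdb ψ) _ z :=
    ((hpd 1).fun_add ((hpd I).const_mul I)).mul_const (2⁻¹ : ℂ) |>.congr_of_eventuallyEq
      (.of_forall fun w => div_eq_mul_inv _ _)
  rw [hwd.wdb_eq, hwdb.wd_eq]
  simp only [smul_apply, sub_apply, add_apply, ContinuousLinearMap.comp_apply,
    ContinuousLinearMap.apply_apply, smul_eq_mul, hsymm]
  ring

end SecondOrder

section Operators

variable {ψ : ℂ → ℂ} {z : ℂ}

theorem wd_one_add_mul_conj : wd (fun w => 1 + w * conj w) z = conj z := by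
  rw [wd_add (by fun_prop) (by fun_prop), wd_mul (by fun_prop) (by fun_prop), wd_const, wd_id,
    wd_conj]
  ring

theorem wdb_one_add_mul_conj : wdb (fun w => 1 + w * conj w) z = z := by
  rw [wdb_add (by fun_prop) (by fun_prop), wdb_mul (by fun_prop) (by fun_prop), wdb_const, wdb_id,
    wdb_conj]
  ring

theorem DNs_DN (K : ℝ) (hψ : ContDiffAt ℝ 2 ψ z) :
    DNs K (DN K ψ) z = LN K ψ z - K * (K + 1) * ψ z := by
  have hψ' : DifferentiableAt ℝ ψ z := hψ.differentiableAt two_ne_zero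
  have hwdb : DifferentiableAt ℝ (wdb ψ) z := (hψ.wdb (m := 1) le_rfl).differentiableAt one_ne_zero
  have hQ : DifferentiableAt ℝ (fun w => 1 + w * conj w) z := by fun_prop
  have hDN : wd (DN K ψ) z = conj z * wdb ψ z + (1 + z * conj z) * wd (wdb ψ) z
      + (K * ψ z + K * z * wd ψ z) := by
    unfold DN
    rw [wd_add (by fun_prop) (by fun_prop), wd_mul hQ hwdb, wd_one_add_mul_conj,
      wd_mul (by fun_prop) hψ', wd_mul (by fun_prop) (by fun_prop), wd_const, wd_id]
    ring
  rw [DNs, hDN, LN, DN]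
  ring

theorem DN_DNs (K : ℝ) (hψ : ContDiffAt ℝ 2 ψ z) :
    DN K (DNs K ψ) z = LN (K + 1) ψ z - K * (K + 1) * ψ z := by
  have hψ' : DifferentiableAt ℝ ψ z := hψ.differentiableAt two_ne_zero
  have hwd : DifferentiableAt ℝ (wd ψ) z := (hψ.wd (m := 1) le_rfl).differentiableAt one_ne_zero
  have hQ : DifferentiableAt ℝ (fun w => -(1 + w * conj w)) z := by fun_prop
  have hDNs : wdb (DNs K ψ) z = -z * wd ψ z - (1 + z * conj z) * wd (wdb ψ) z
      + ((K + 1) * ψ z + (K + 1) * conj z * wdb ψ z) := by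
    unfold DNs
    rw [wdb_add (by fun_prop) (by fun_prop), wdb_mul hQ hwd, wdb_mul (by fun_prop) hψ',
      wdb_mul (by fun_prop) (by fun_prop), wdb_const, wdb_conj, wdb_wd_comm hψ,
      wdb_neg (by fun_prop), wdb_one_add_mul_conj]
    ring
  rw [DN, hDNs, LN, DNs]
  push_cast
  ring

theorem DNs_const_mul (K : ℝ) (c : ℂ) (hψ : DifferentiableAt ℝ ψ z) :
    DNs K (fun w => c * ψ w) z = c * DNs K ψ z := by
  rw [DNs, DNs, wd_mul (differentiableAt_const c) hψ, wd_const]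
  ring

end Operators

section GroundState

variable {f : ℂ → ℂ} {z : ℂ}

theorem one_add_normSq_pos (z : ℂ) : 0 < 1 + normSq z :=
  add_pos_of_pos_of_nonneg one_pos (normSq_nonneg z)

theorem one_add_mul_conj_mem_slitPlane (z : ℂ) : 1 + z * conj z ∈ slitPlane := by
  rw [mul_conj]
  exact_mod_cast ofReal_mem_slitPlane.2 (one_add_normSq_pos z)

/-- Written as a complex power, the weight `(1 + |z|²) ^ a` is a holomorphic function of
`1 + z * conj z`, so `wdb_comp` computes its Wirtinger derivative. -/
theorem ofReal_one_add_normSq_rpow (a : ℝ) (z : ℂ) :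
    (((1 + normSq z) ^ a : ℝ) : ℂ) = (1 + z * conj z) ^ (a : ℂ) := by
  rw [ofReal_cpow (one_add_normSq_pos z).le, mul_conj]
  push_cast
  rfl

theorem wdb_one_add_mul_conj_cpow (a : ℂ) :
    wdb (fun w => (1 + w * conj w) ^ a) z = a * (1 + z * conj z) ^ (a - 1) * z := by
  have hpow := hasStrictDerivAt_cpow_const (c := a) (one_add_mul_conj_mem_slitPlane z)
  rw [wdb_comp (f := fun w => 1 + w * conj w) (g := fun u => u ^ a)
    hpow.hasDerivAt.differentiableAt (by fun_prop), hpow.hasDerivAt.deriv, wdb_one_add_mul_conj]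

theorem contDiff_one_add_normSq_rpow (a : ℝ) :
    ContDiff ℝ ∞ (fun w : ℂ => (((1 + normSq w) ^ a : ℝ) : ℂ)) := by
  have hQ : ContDiff ℝ ∞ (fun w : ℂ => 1 + normSq w) := by
    simpa only [normSq_eq_norm_sq] using contDiff_const.add (contDiff_norm_sq ℝ)
  exact ofRealCLM.contDiff.comp <| hQ.rpow_const_of_ne fun w => (one_add_normSq_pos w).ne'

theorem DN_mul_one_add_normSq_rpow_neg (N : ℝ) (hf : DifferentiableAt ℂ f z) :
    DN N (fun w => f w * (((1 + normSq w) ^ (-N) : ℝ) : ℂ)) z = 0 := by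
  simp_rw [ofReal_one_add_normSq_rpow]
  have hQ : 1 + z * conj z ≠ 0 := slitPlane_ne_zero (one_add_mul_conj_mem_slitPlane z)
  have hpow : DifferentiableAt ℝ (fun w => (1 + w * conj w) ^ ((-N : ℝ) : ℂ)) z :=
    (hasStrictDerivAt_cpow_const (one_add_mul_conj_mem_slitPlane z)).hasDerivAt.differentiableAt
      |>.restrictScalars ℝ |>.comp (f := fun w => 1 + w * conj w) z (by fun_prop)
  rw [DN, wdb_mul (hf.restrictScalars ℝ) hpow, wdb_eq_zero_of_differentiableAt hf,
    wdb_one_add_mul_conj_cpow, cpow_sub _ _ hQ, cpow_one]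
  field_simp
  push_cast
  ring

end GroundState

section Eigenfunctions

variable {ψ : ℂ → ℂ} {K : ℝ} {μ : ℂ} {m n : ℕ∞ω}

theorem ContDiffAt.DNs {z : ℂ} (hψ : ContDiffAt ℝ n ψ z) (hmn : m + 1 ≤ n) :
    ContDiffAt ℝ m (DNs K ψ) z := by
  have h1 : ContDiffAt ℝ m (_root_.wd ψ) z := hψ.wd hmn
  have h2 : ContDiffAt ℝ m ψ z := hψ.of_le (le_self_add.trans hmn)
  unfold _root_.DNs
  fun_prop

theorem ContDiff.DNs (hψ : ContDiff ℝ n ψ) (hmn : m + 1 ≤ n) : ContDiff ℝ m (DNs K ψ) :=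
  contDiff_iff_contDiffAt.2 fun _ => hψ.contDiffAt.DNs hmn

theorem LN_eq_of_DN_eq_zero {z : ℂ} (hψ : ContDiffAt ℝ 2 ψ z) (h : ∀ w, DN K ψ w = 0) :
    LN K ψ z = K * (K + 1) * ψ z := by
  have hA := DNs_DN K hψ
  rw [show DN K ψ = fun _ => 0 from funext h, DNs, wd_const] at hA
  linear_combination -hA

theorem LN_DNs_eq_of_LN_add_one_eq (hψ : ContDiff ℝ 3 ψ) (h : ∀ w, LN (K + 1) ψ w = μ * ψ w)
    (z : ℂ) : LN K (DNs K ψ) z = μ * DNs K ψ z := by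
  have hDN : DN K (DNs K ψ) = fun w => (μ - K * (K + 1)) * ψ w := funext fun w => by
    rw [DN_DNs K (hψ.contDiffAt.of_le (by norm_num)), h w]
    ring
  have hA := DNs_DN K ((hψ.contDiffAt (x := z)).DNs (K := K) (by norm_num))
  rw [hDN, DNs_const_mul K _ (hψ.differentiable (by norm_num) z)] at hA
  linear_combination -hA

end Eigenfunctions

section RaisingChain

variable {N : ℝ} {ψ0 : ℂ → ℂ}

theorem contDiff_raiseChain (hψ0 : ContDiff ℝ ∞ ψ0) (k : ℕ) :
    ContDiff ℝ ∞ (raiseChain N ψ0 k) := by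
  induction k with
  | zero => exact hψ0
  | succ k ih => exact ih.DNs (show (∞ : ℕ∞ω) + 1 = ∞ from rfl).le

theorem LN_raiseChain (hψ0 : ContDiff ℝ ∞ ψ0) (h0 : ∀ z, DN N ψ0 z = 0) (k : ℕ) (z : ℂ) :
    LN (N - k) (raiseChain N ψ0 k) z = N * (N + 1) * raiseChain N ψ0 k z := by
  induction k generalizing z with
  | zero =>
    simpa [raiseChain] using LN_eq_of_DN_eq_zero (hψ0.contDiffAt.of_le ENat.LEInfty.out) h0
  | succ k ih =>
    have hK : N - ((k : ℝ) + 1) + 1 = N - k := by ring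
    push_cast
    exact LN_DNs_eq_of_LN_add_one_eq ((contDiff_raiseChain hψ0 k).of_le ENat.LEInfty.out)
      (by rwa [hK]) z

end RaisingChain

/-- applying m raising operators to ψ₀ = f·(1+|z|²)^{-N} (f entire)
gives an eigenfunction of L_{N-m} with eigenvalue N(N+1); equivalently an
eigenfunction of the monopole Hamiltonian H_q = L_{N-m} - (N-m)², q = 2(N-m),
with eigenvalue (2m+1)(q/2) + m(m+1). -/
theorem raised_ground_states_are_eigenfunctions
    (N : ℝ) (m : ℕ) (f : ℂ → ℂ) (hf : Differentiable ℂ f) :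
    let ψ0 : ℂ → ℂ := fun z => f z * ((((1 + Complex.normSq z) ^ (-N) : ℝ)) : ℂ)
    let ψ : ℂ → ℂ := raiseChain N ψ0 m
    ∀ z : ℂ,
      LN (N - (m : ℝ)) ψ z = (N : ℂ) * ((N : ℂ) + 1) * ψ z ∧
      LN (N - (m : ℝ)) ψ z - ((N : ℂ) - (m : ℂ))^2 * ψ z
        = ((2 * (m : ℂ) + 1) * ((2 * ((N : ℂ) - (m : ℂ))) / 2)
            + (m : ℂ) * ((m : ℂ) + 1)) * ψ z := by
  intro ψ0 ψ z
  have hψ0 : ContDiff ℝ ∞ ψ0 :=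
    (hf.contDiff.restrict_scalars ℝ).mul (contDiff_one_add_normSq_rpow (-N))
  have hL : LN (N - m) ψ z = N * (N + 1) * ψ z :=
    LN_raiseChain hψ0 (fun w => DN_mul_one_add_normSq_rpow_neg N (hf w)) m z
  exact ⟨hL, by rw [hL]; ring⟩
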